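/- Under the setup of the regret bound for online stochastic gradient descent under the PL condition (Fₜ : ℝⁿ → ℝ differentiable, β-smooth, attaining infimum Fₜ*, satisfying the PL condition with constant μ > 0; |Fₜ₊₁ − Fₜ| ≤ Kηₜ pointwise; ‖∇Fₜ₊₁ − ∇Fₜ‖ ≤ Jₜ pointwise; unbiased stochastic gradient oracles Gₜ with variance bound σₜ² ≤ σ² for all t and a common σ > 0; iterates X₁ ≡ x₁, Xₜ₊₁ = Xₜ − γ Gₜ(Xₜ, ωₜ); suitable measurability and integrability), suppose T ≥ 2 and the step size is γ = Θ/√T with Θ = min(1/β, 1/(2μ)). Then Σₜ₌₁ᵀ E[Fₜ(Xₜ) − Fₜ*] ≤ M₁√T + M₂ √T Σₜ₌₁^{T−1} ηₜ + M₃ √T Σₜ₌₁^{T−1} Jₜ², where M₁ = (1/(μΘ))(F₁(x₁) − F₁*) + σ²/(2μ), M₂ = 2K/(μΘ), and M₃ = 1/(2μ²Θ). -/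

import Mathlib

/-!
`β`-smoothness gives the descent inequality `f (x - γ g) ≤ f x - γ ⟪∇f x, g⟫ + β γ² ‖g‖² / 2`.
Averaging over the fresh noise of step `t` (unbiased, with second moment at most
`‖∇Fₜ(x)‖² + σ²`) and using `βγ ≤ 1` and the PL inequality gives
`E[Fₜ(Xₜ₊₁)] - Fₜ* ≤ (1 - γμ) E[Fₜ(Xₜ) - Fₜ*] + βγ²σ²/2`. Since `|Fₜ₊₁ - Fₜ| ≤ Kηₜ` also moves
the minimum value by at most `Kηₜ`, the gaps `dₜ = E[Fₜ(Xₜ) - Fₜ*]` satisfy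
`dₜ₊₁ ≤ (1 - γμ) dₜ + βγ²σ²/2 + 2Kηₜ`. Summing gives `γμ Σₜ dₜ ≤ d₁ + Tβγ²σ²/2 + 2K Σₜ ηₜ`,
and `γ = Θ/√T` with `βΘ ≤ 1` turns this into the stated bound.
-/

open MeasureTheory
open scoped RealInnerProductSpace

def MeasurableEquiv.piFinSnoc {n : ℕ} (α : Fin (n + 1) → Type*) [∀ i, MeasurableSpace (α i)] :
    (∀ i : Fin n, α i.castSucc) × α (Fin.last n) ≃ᵐ ∀ i, α i where
  toEquiv := (Equiv.prodComm _ _).trans (Fin.snocEquiv α)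
  measurable_toFun := measurable_pi_iff.2 fun i => by
    induction i using Fin.lastCases with
    | last => simpa using measurable_snd
    | cast i => simpa [Function.comp_def] using (measurable_pi_apply i).comp measurable_fst
  measurable_invFun :=
    (measurable_pi_iff.2 fun i => measurable_pi_apply i.castSucc).prodMk (measurable_pi_apply _)

@[simp]
theorem MeasurableEquiv.piFinSnoc_apply {n : ℕ} {α : Fin (n + 1) → Type*}
    [∀ i, MeasurableSpace (α i)] (p : (∀ i : Fin n, α i.castSucc) × α (Fin.last n)) :
    MeasurableEquiv.piFinSnoc α p = Fin.snoc p.1 p.2 := rfl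

theorem measurePreserving_piFinSnoc {n : ℕ} {α : Fin (n + 1) → Type*}
    [∀ i, MeasurableSpace (α i)] (μ : ∀ i, Measure (α i)) [∀ i, SigmaFinite (μ i)] :
    MeasurePreserving (MeasurableEquiv.piFinSnoc α)
      ((Measure.pi fun i : Fin n => μ i.castSucc).prod (μ (Fin.last n))) (Measure.pi μ) := by
  refine ⟨(MeasurableEquiv.piFinSnoc α).measurable, (Measure.pi_eq fun s hs => ?_).symm⟩
  have hpre : MeasurableEquiv.piFinSnoc α ⁻¹' Set.univ.pi s
      = (Set.univ.pi fun i : Fin n => s i.castSucc) ×ˢ s (Fin.last n) := by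
    ext p
    simp [Fin.forall_fin_succ', and_comm]
  rw [MeasurableEquiv.map_apply, hpre, Measure.prod_prod, Measure.pi_pi, Fin.prod_univ_castSucc]

section Descent

variable {E : Type*} [NormedAddCommGroup E] [InnerProductSpace ℝ E] [CompleteSpace E]

theorem le_add_inner_gradient_add_sq {f : E → ℝ} {β : ℝ} (hf : Differentiable ℝ f)
    (hL : ∀ u v, ‖gradient f u - gradient f v‖ ≤ β * ‖u - v‖) (x y : E) :
    f y ≤ f x + ⟪gradient f x, y - x⟫ + β / 2 * ‖y - x‖ ^ 2 := by
  set d := y - x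
  set φ : ℝ → ℝ := fun s => f (x + s • d) - s * ⟪gradient f x, d⟫ - β / 2 * s ^ 2 * ‖d‖ ^ 2
  have hline : ∀ s : ℝ, HasDerivAt (fun s : ℝ => x + s • d) d s := fun s => by
    simpa using ((hasDerivAt_id s).smul_const d).const_add x
  have hφ : ∀ s, HasDerivAt φ (⟪gradient f (x + s • d), d⟫ - ⟪gradient f x, d⟫
      - β * s * ‖d‖ ^ 2) s := fun s => by
    have hfs : HasDerivAt (fun s : ℝ => f (x + s • d)) ⟪gradient f (x + s • d), d⟫ s := by
      have hfx : HasFDerivAt f (InnerProductSpace.toDual ℝ E (gradient f (x + s • d)))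
          (x + s • d) := (hf _).hasGradientAt
      exact hfx.comp_hasDerivAt s (hline s)
    refine ((hfs.sub ((hasDerivAt_id s).mul_const ⟪gradient f x, d⟫)).sub
      (((hasDerivAt_pow 2 s).const_mul (β / 2)).mul_const (‖d‖ ^ 2))).congr_deriv ?_
    simp only [one_mul, Nat.cast_ofNat]; ring
  have hanti : AntitoneOn φ (Set.Icc 0 1) := by
    refine antitoneOn_of_hasDerivWithinAt_nonpos (convex_Icc 0 1)
      (fun s _ => (hφ s).continuousAt.continuousWithinAt)
      (fun s _ => (hφ s).hasDerivWithinAt) fun s hs => ?_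
    rw [interior_Icc] at hs
    have hgap : ⟪gradient f (x + s • d) - gradient f x, d⟫ ≤ β * s * ‖d‖ ^ 2 := calc
      _ ≤ ‖gradient f (x + s • d) - gradient f x‖ * ‖d‖ := real_inner_le_norm _ _
      _ ≤ (β * ‖(x + s • d) - x‖) * ‖d‖ := by gcongr; exact hL _ _
      _ = β * s * ‖d‖ ^ 2 := by
        rw [add_sub_cancel_left, norm_smul, Real.norm_of_nonneg hs.1.le]; ring
    rw [inner_sub_left] at hgap
    linarith
  have h01 := hanti (by simp) (by simp) zero_le_one
  simp only [φ, zero_smul, add_zero, one_smul, zero_mul, sub_zero, one_mul, one_pow, ne_eq,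
    OfNat.ofNat_ne_zero, not_false_eq_true, zero_pow, mul_zero, d, add_sub_cancel] at h01
  linarith

variable {Ω : Type*} [MeasurableSpace Ω] {P : Measure Ω} [IsProbabilityMeasure P]

theorem integral_norm_sq_eq_integral_norm_sub_sq_add {g : Ω → E} (hg : Integrable g P)
    (hg2 : Integrable (fun ω => ‖g ω‖ ^ 2) P) :
    ∫ ω, ‖g ω‖ ^ 2 ∂P = ∫ ω, ‖g ω - ∫ ω', g ω' ∂P‖ ^ 2 ∂P + ‖∫ ω, g ω ∂P‖ ^ 2 := by
  set m := ∫ ω, g ω ∂P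
  have hinner : Integrable (fun ω => ⟪m, g ω⟫) P := hg.const_inner m
  have hexpand : ∀ ω, ‖g ω - m‖ ^ 2 = ‖g ω‖ ^ 2 - 2 * ⟪m, g ω⟫ + ‖m‖ ^ 2 := fun ω => by
    rw [norm_sub_sq_real, real_inner_comm]
  simp_rw [hexpand]
  have hsub : Integrable (fun ω => ‖g ω‖ ^ 2 - 2 * ⟪m, g ω⟫) P := hg2.sub (hinner.const_mul 2)
  rw [integral_add hsub (integrable_const _), integral_sub hg2 (hinner.const_mul 2),
    integral_const_mul, integral_inner hg, real_inner_self_eq_norm_sq, integral_const,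
    probReal_univ, one_smul]
  ring

theorem integral_comp_sub_smul_le {f h : E → ℝ} {β γ σ c : ℝ} (hβ : 0 ≤ β)
    (hf : Differentiable ℝ f) (hL : ∀ u v, ‖gradient f u - gradient f v‖ ≤ β * ‖u - v‖)
    (hh : ∀ y, h y ≤ f y + c) {g : Ω → E} {x : E} (hg : Integrable g P)
    (hg2 : Integrable (fun ω => ‖g ω‖ ^ 2) P) (hmean : ∫ ω, g ω ∂P = gradient f x)
    (hvar : ∫ ω, ‖g ω - gradient f x‖ ^ 2 ∂P ≤ σ ^ 2)
    (hint : Integrable (fun ω => h (x - γ • g ω)) P) :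
    ∫ ω, h (x - γ • g ω) ∂P
      ≤ f x - γ * ‖gradient f x‖ ^ 2 + β * γ ^ 2 / 2 * (σ ^ 2 + ‖gradient f x‖ ^ 2) + c := by
  have hinner : Integrable (fun ω => ⟪gradient f x, g ω⟫) P := hg.const_inner _
  have hpoint : ∀ ω, h (x - γ • g ω)
      ≤ f x - γ * ⟪gradient f x, g ω⟫ + β * γ ^ 2 / 2 * ‖g ω‖ ^ 2 + c := fun ω => by
    have := le_add_inner_gradient_add_sq hf hL x (x - γ • g ω)
    rw [sub_sub_cancel_left, inner_neg_right, real_inner_smul_right, norm_neg, norm_smul,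
      Real.norm_eq_abs, mul_pow, sq_abs] at this
    linarith [hh (x - γ • g ω)]
  have hlin : Integrable (fun ω => f x - γ * ⟪gradient f x, g ω⟫) P :=
    (integrable_const _).sub (hinner.const_mul γ)
  have hquad : Integrable (fun ω => β * γ ^ 2 / 2 * ‖g ω‖ ^ 2) P := hg2.const_mul _
  have hbound : Integrable
      (fun ω => f x - γ * ⟪gradient f x, g ω⟫ + β * γ ^ 2 / 2 * ‖g ω‖ ^ 2) P := hlin.add hquad
  have hsecond := integral_norm_sq_eq_integral_norm_sub_sq_add hg hg2
  rw [hmean] at hsecond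
  calc ∫ ω, h (x - γ • g ω) ∂P
      ≤ ∫ ω, (f x - γ * ⟪gradient f x, g ω⟫ + β * γ ^ 2 / 2 * ‖g ω‖ ^ 2 + c) ∂P :=
        integral_mono hint (hbound.add (integrable_const c)) hpoint
    _ = f x - γ * ‖gradient f x‖ ^ 2 + β * γ ^ 2 / 2 * ∫ ω, ‖g ω‖ ^ 2 ∂P + c := by
        rw [integral_add hbound (integrable_const c), integral_add hlin hquad,
          integral_sub (integrable_const _) (hinner.const_mul γ), integral_const_mul,
          integral_const_mul, integral_inner hg, hmean, real_inner_self_eq_norm_sq]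
        simp only [integral_const, probReal_univ, one_smul]
    _ ≤ _ := by rw [hsecond]; gcongr

theorem integral_pi_sgd_step_sub_le {k : ℕ} {α : Fin (k + 1) → Type*}
    [∀ i, MeasurableSpace (α i)] {μ : ∀ i, Measure (α i)} [∀ i, IsProbabilityMeasure (μ i)]
    {f h : E → ℝ} {β γ mu σ c m m' : ℝ} (hβ : 0 ≤ β) (hγ : 0 ≤ γ) (hβγ : β * γ ≤ 1)
    (hf : Differentiable ℝ f) (hL : ∀ u v, ‖gradient f u - gradient f v‖ ≤ β * ‖u - v‖)
    (hPL : ∀ y, mu * (f y - m) ≤ 1 / 2 * ‖gradient f y‖ ^ 2)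
    (hlb : ∀ y, m ≤ f y) (hdrift : ∀ y, |h y - f y| ≤ c) (hatt : ∃ y, h y = m')
    {G : E → α (Fin.last k) → E}
    (hG : ∀ y, Integrable (G y) (μ (Fin.last k)))
    (hGmean : ∀ y, ∫ ω, G y ω ∂μ (Fin.last k) = gradient f y)
    (hGvar : ∀ y, ∫ ω, ‖G y ω - gradient f y‖ ^ 2 ∂μ (Fin.last k) ≤ σ ^ 2)
    {Y : (∀ i : Fin k, α i.castSucc) → E} {Y' : (∀ i, α i) → E}
    (hY' : ∀ ω, Y' ω = Y (Fin.init ω) - γ • G (Y (Fin.init ω)) (ω (Fin.last k)))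
    (hfY : Integrable (fun x => f (Y x)) (Measure.pi fun i : Fin k => μ i.castSucc))
    (hGY : Integrable (fun ω => ‖G (Y (Fin.init ω)) (ω (Fin.last k))‖ ^ 2) (Measure.pi μ))
    (hhY : Integrable (fun ω => h (Y' ω)) (Measure.pi μ)) :
    ∫ ω, (h (Y' ω) - m') ∂Measure.pi μ
      ≤ (1 - γ * mu) * ∫ x, (f (Y x) - m) ∂Measure.pi (fun i : Fin k => μ i.castSucc)
        + β * γ ^ 2 * σ ^ 2 / 2 + 2 * c := by
  have hh : ∀ y, h y ≤ f y + c := fun y => by linarith [(abs_le.1 (hdrift y)).2]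
  have hm : m ≤ m' + c := by
    obtain ⟨y, hy⟩ := hatt
    linarith [hlb y, (abs_le.1 (hdrift y)).1]
  have he := measurePreserving_piFinSnoc μ
  have hYe : ∀ z, Y' (MeasurableEquiv.piFinSnoc α z) = Y z.1 - γ • G (Y z.1) z.2 := fun z => by
    simp [hY']
  have hGY' := (he.integrable_comp_emb (MeasurableEquiv.measurableEmbedding _)).2 hGY
  have hhY' := (he.integrable_comp_emb (MeasurableEquiv.measurableEmbedding _)).2 hhY
  simp only [Function.comp_def, MeasurableEquiv.piFinSnoc_apply, Fin.init_snoc,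
    Fin.snoc_last] at hGY'
  simp only [Function.comp_def, hYe] at hhY'
  have hgap : Integrable (fun x => f (Y x) - m) (Measure.pi fun i : Fin k => μ i.castSucc) :=
    hfY.sub (integrable_const m)
  have hinner : ∀ᵐ x ∂Measure.pi (fun i : Fin k => μ i.castSucc),
      ∫ ω, (h (Y x - γ • G (Y x) ω) - m') ∂μ (Fin.last k)
        ≤ (1 - γ * mu) * (f (Y x) - m) + (β * γ ^ 2 * σ ^ 2 / 2 + 2 * c) := by
    filter_upwards [hGY'.prod_right_ae, hhY'.prod_right_ae] with x hGx hhx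
    have hstep := integral_comp_sub_smul_le hβ hf hL hh (hG (Y x)) hGx (hGmean (Y x))
      (hGvar (Y x)) hhx
    rw [integral_sub hhx (integrable_const m'), integral_const, probReal_univ, one_smul]
    have hPLx := mul_le_mul_of_nonneg_left (hPL (Y x)) hγ
    have hcurv : 0 ≤ γ * (1 - β * γ) * ‖gradient f (Y x)‖ ^ 2 := by
      have := sub_nonneg.2 hβγ; positivity
    linarith
  rw [← he.integral_comp']
  simp only [hYe]
  calc _ = ∫ x, ∫ ω, (h (Y x - γ • G (Y x) ω) - m') ∂μ (Fin.last k)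
          ∂Measure.pi (fun i : Fin k => μ i.castSucc) :=
        integral_prod _ (hhY'.sub (integrable_const m'))
    _ ≤ ∫ x, ((1 - γ * mu) * (f (Y x) - m) + (β * γ ^ 2 * σ ^ 2 / 2 + 2 * c))
          ∂Measure.pi (fun i : Fin k => μ i.castSucc) :=
        integral_mono_ae (hhY'.sub (integrable_const m')).integral_prod_left
          ((hgap.const_mul _).add (integrable_const _)) hinner
    _ = _ := by
        rw [integral_add (hgap.const_mul _) (integrable_const _), integral_const_mul,
          integral_const, probReal_univ, one_smul, add_assoc]

end Descent

open Finset in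
theorem mul_sum_range_le_of_le_one_sub_mul_add {d e : ℕ → ℝ} {a b : ℝ} {N : ℕ} (ha : a ≤ 1)
    (hdN : 0 ≤ d N) (hrec : ∀ k < N, d (k + 1) ≤ (1 - a) * d k + b + e k) :
    a * ∑ k ∈ range (N + 1), d k ≤ d 0 + N * b + ∑ k ∈ range N, e k := by
  have hshift : ∑ k ∈ range N, d (k + 1) ≤ (1 - a) * ∑ k ∈ range N, d k + N * b
      + ∑ k ∈ range N, e k := by
    calc ∑ k ∈ range N, d (k + 1) ≤ ∑ k ∈ range N, ((1 - a) * d k + b + e k) :=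
          sum_le_sum fun k hk => hrec k (mem_range.1 hk)
      _ = _ := by rw [sum_add_distrib, sum_add_distrib, ← mul_sum, sum_const, card_range,
          nsmul_eq_mul]
  have hlast : 0 ≤ (1 - a) * d N := mul_nonneg (sub_nonneg.2 ha) hdN
  have htel : ∑ k ∈ range N, d k + d N = ∑ k ∈ range N, d (k + 1) + d 0 := by
    rw [← sum_range_succ, sum_range_succ']
  rw [sum_range_succ]
  linarith

theorem le_regret_bound_of_mul_le {S D H Q β mu σ K Θ s : ℝ} {N : ℕ} (hβ : 0 ≤ β)
    (hmu : 0 < mu) (hΘ : 0 < Θ) (hβΘ : β * Θ ≤ 1) (hs : 0 < s) (hNs : (N : ℝ) ≤ s ^ 2)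
    (hQ : 0 ≤ Q) (h : Θ / s * mu * S ≤ D + N * (β * (Θ / s) ^ 2 * σ ^ 2 / 2) + 2 * K * H) :
    S ≤ ((1 / (mu * Θ)) * D + σ ^ 2 / (2 * mu)) * s + (2 * K / (mu * Θ)) * s * H
      + (1 / (2 * mu ^ 2 * Θ)) * s * Q := by
  have hnoise : N * (β * (Θ / s) ^ 2 * σ ^ 2 / 2) ≤ Θ * σ ^ 2 / 2 := by
    have hN : N * (Θ / s) ^ 2 ≤ Θ ^ 2 := by
      rw [div_pow, mul_div_assoc', div_le_iff₀ (by positivity)]; nlinarith [sq_nonneg Θ]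
    have : 0 ≤ β * σ ^ 2 / 2 := by positivity
    nlinarith [mul_le_mul_of_nonneg_left hβΘ (by positivity : (0 : ℝ) ≤ Θ * σ ^ 2 / 2)]
  rw [← mul_le_mul_iff_of_pos_left (by positivity : 0 < Θ / s * mu)]
  have hR : Θ / s * mu * (((1 / (mu * Θ)) * D + σ ^ 2 / (2 * mu)) * s
      + (2 * K / (mu * Θ)) * s * H + (1 / (2 * mu ^ 2 * Θ)) * s * Q)
      = D + Θ * σ ^ 2 / 2 + 2 * K * H + Q / (2 * mu) := by
    field_simp
  rw [hR]
  have : 0 ≤ Q / (2 * mu) := by positivity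
  linarith

theorem stmt9_general {n : ℕ} (T : ℕ) (hT : 2 ≤ T)
    (β mu K σ : ℝ) (hβ : 0 < β) (hmu : 0 < mu)
    (F : ℕ → EuclideanSpace ℝ (Fin n) → ℝ) (Fs : ℕ → ℝ)
    (hFdiff : ∀ t, 1 ≤ t → t ≤ T → Differentiable ℝ (F t))
    (hFsmooth : ∀ t, 1 ≤ t → t ≤ T → ∀ u v : EuclideanSpace ℝ (Fin n),
      ‖gradient (F t) u - gradient (F t) v‖ ≤ β * ‖u - v‖)
    (hFs_lb : ∀ t, 1 ≤ t → t ≤ T → ∀ x, Fs t ≤ F t x)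
    (hFs_att : ∀ t, 1 ≤ t → t ≤ T → ∃ x, F t x = Fs t)
    (hPL : ∀ t, 1 ≤ t → t ≤ T → ∀ x,
      mu * (F t x - Fs t) ≤ (1 / 2) * ‖gradient (F t) x‖ ^ 2)
    (η J : ℕ → ℝ)
    (hdrift : ∀ t, 1 ≤ t → t ≤ T - 1 → ∀ x, |F (t + 1) x - F t x| ≤ K * η t)
    (Ω : ℕ → Type*) [∀ t, MeasurableSpace (Ω t)]
    (P : (t : ℕ) → Measure (Ω t)) [∀ t, IsProbabilityMeasure (P t)]
    (G : (t : ℕ) → EuclideanSpace ℝ (Fin n) → Ω t → EuclideanSpace ℝ (Fin n))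
    (hGint : ∀ t, 1 ≤ t → t ≤ T - 1 → ∀ x, Integrable (G t x) (P t))
    (hGmean : ∀ t, 1 ≤ t → t ≤ T - 1 → ∀ x, ∫ ω, G t x ω ∂(P t) = gradient (F t) x)
    (hGvar : ∀ t, 1 ≤ t → t ≤ T - 1 → ∀ x,
      (∫ ω, ‖G t x ω - gradient (F t) x‖ ^ 2 ∂(P t)) ≤ σ ^ 2)
    (x1 : EuclideanSpace ℝ (Fin n)) (Θ γ : ℝ)
    (hΘ : Θ = min (1 / β) (1 / (2 * mu)))
    (hγ : γ = Θ / Real.sqrt T)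
    (Y : (k : ℕ) → ((i : Fin k) → Ω (i + 1)) → EuclideanSpace ℝ (Fin n))
    (hY0 : ∀ ω, Y 0 ω = x1)
    (hYrec : ∀ k : ℕ, k + 1 < T → ∀ ω : (i : Fin (k + 1)) → Ω (i + 1),
      Y (k + 1) ω = Y k (fun i => ω i.castSucc)
        - γ • G (k + 1) (Y k (fun i => ω i.castSucc)) (ω (Fin.last k)))
    (hFXint : ∀ k, k < T → Integrable (fun ω => F (k + 1) (Y k ω))
      (Measure.pi (fun i : Fin k => P (i + 1))))
    (hGXint : ∀ k : ℕ, k + 1 < T →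
      Integrable (fun ω : (i : Fin (k + 1)) → Ω (i + 1) =>
          ‖G (k + 1) (Y k (fun i => ω i.castSucc)) (ω (Fin.last k))‖ ^ 2)
        (Measure.pi (fun i : Fin (k + 1) => P (i + 1)))) :
    ∑ k ∈ Finset.range T,
        (∫ ω, (F (k + 1) (Y k ω) - Fs (k + 1)) ∂(Measure.pi (fun i : Fin k => P (i + 1))))
      ≤ ((1 / (mu * Θ)) * (F 1 x1 - Fs 1) + σ ^ 2 / (2 * mu)) * Real.sqrt T
        + (2 * K / (mu * Θ)) * Real.sqrt T * ∑ t ∈ Finset.Icc 1 (T - 1), η t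
        + (1 / (2 * mu ^ 2 * Θ)) * Real.sqrt T * ∑ t ∈ Finset.Icc 1 (T - 1), (J t) ^ 2 := by
  obtain ⟨N, rfl⟩ : ∃ N, T = N + 1 := ⟨T - 1, by omega⟩
  have hΘ0 : 0 < Θ := hΘ ▸ lt_min (by positivity) (by positivity)
  have hβΘ : β * Θ ≤ 1 := by
    rw [mul_comm, ← le_div_iff₀ hβ]; exact hΘ ▸ min_le_left _ _
  have hmuΘ : 2 * mu * Θ ≤ 1 := by
    rw [mul_comm, ← le_div_iff₀ (by positivity)]; exact hΘ ▸ min_le_right _ _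
  have hs : 1 ≤ Real.sqrt ((N + 1 : ℕ) : ℝ) := Real.one_le_sqrt.2 (by simp)
  have hγ0 : 0 < γ := hγ ▸ by positivity
  have hγΘ : γ ≤ Θ := hγ ▸ div_le_self hΘ0.le hs
  set d : ℕ → ℝ := fun k =>
    ∫ ω, (F (k + 1) (Y k ω) - Fs (k + 1)) ∂(Measure.pi (fun i : Fin k => P (i + 1)))
  have hd0 : d 0 = F 1 x1 - Fs 1 := by simp [d, hY0]
  have hdN : 0 ≤ d N := integral_nonneg fun ω => sub_nonneg.2 (hFs_lb _ (by omega) (by omega) _)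
  have hrec : ∀ k < N, d (k + 1)
      ≤ (1 - γ * mu) * d k + β * γ ^ 2 * σ ^ 2 / 2 + 2 * (K * η (k + 1)) := by
    intro k hk
    exact integral_pi_sgd_step_sub_le (μ := fun i : Fin (k + 1) => P (i + 1)) hβ.le hγ0.le
      ((mul_le_mul_of_nonneg_left hγΘ hβ.le).trans hβΘ) (hFdiff _ (by omega) (by omega))
      (hFsmooth _ (by omega) (by omega)) (hPL _ (by omega) (by omega))
      (hFs_lb _ (by omega) (by omega)) (hdrift _ (by omega) (by omega))
      (hFs_att _ (by omega) (by omega)) (hGint _ (by omega) (by omega))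
      (hGmean _ (by omega) (by omega)) (hGvar _ (by omega) (by omega)) (hYrec k (by omega))
      (hFXint k (by omega)) (hGXint k (by omega)) (hFXint (k + 1) (by omega))
  have hsum := mul_sum_range_le_of_le_one_sub_mul_add (by nlinarith) hdN hrec
  have hηsum : ∑ k ∈ Finset.range N, 2 * (K * η (k + 1)) = 2 * K * ∑ t ∈ Finset.Icc 1 N, η t := by
    rw [← Finset.mul_sum, ← Finset.mul_sum, Finset.range_eq_Ico, Finset.sum_Ico_add',
      Finset.Ico_add_one_right_eq_Icc, mul_assoc]
  rw [hd0, hηsum, hγ] at hsum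
  rw [Nat.add_sub_cancel]
  exact le_regret_bound_of_mul_le hβ.le hmu hΘ0 hβΘ (by positivity)
    (by rw [Real.sq_sqrt (by positivity)]; push_cast; linarith)
    (Finset.sum_nonneg fun t _ => sq_nonneg (J t)) hsum

/-- **`O(√T)`-type regret bound for online SGD with the step size `γ = Θ/√T`.**
Same setup as the regret bound of online stochastic gradient descent under the PL
condition, with a common variance bound `σ²` for all gradient oracles, `T ≥ 2`,
`Θ = min(1/β, 1/(2 mu))` and `γ = Θ/√T`.  Then
`Σₜ₌₁ᵀ E[Fₜ(Xₜ) - Fₜ*] ≤ M₁√T + M₂√T Σηₜ + M₃√T ΣJₜ²` where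
`M₁ = (1/(mu Θ))(F₁(x₁) - F₁*) + σ²/(2 mu)`, `M₂ = 2K/(mu Θ)`, `M₃ = 1/(2 mu² Θ)`. -/
theorem stmt9 {n : ℕ} (hn : 1 ≤ n) (T : ℕ) (hT : 2 ≤ T)
    (β mu K σ : ℝ) (hβ : 0 < β) (hmu : 0 < mu) (hK : 0 < K) (hσ : 0 < σ)
    (F : ℕ → EuclideanSpace ℝ (Fin n) → ℝ) (Fs : ℕ → ℝ)
    (hFdiff : ∀ t, 1 ≤ t → t ≤ T → Differentiable ℝ (F t))
    (hFsmooth : ∀ t, 1 ≤ t → t ≤ T → ∀ u v : EuclideanSpace ℝ (Fin n),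
      ‖gradient (F t) u - gradient (F t) v‖ ≤ β * ‖u - v‖)
    (hFs_lb : ∀ t, 1 ≤ t → t ≤ T → ∀ x, Fs t ≤ F t x)
    (hFs_att : ∀ t, 1 ≤ t → t ≤ T → ∃ x, F t x = Fs t)
    (hPL : ∀ t, 1 ≤ t → t ≤ T → ∀ x,
      mu * (F t x - Fs t) ≤ (1 / 2) * ‖gradient (F t) x‖ ^ 2)
    (η J : ℕ → ℝ)
    (hη : ∀ t, 1 ≤ t → t ≤ T - 1 → 0 < η t)
    (hJ : ∀ t, 1 ≤ t → t ≤ T - 1 → 0 ≤ J t)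
    (hdrift : ∀ t, 1 ≤ t → t ≤ T - 1 → ∀ x, |F (t + 1) x - F t x| ≤ K * η t)
    (hgradshift : ∀ t, 1 ≤ t → t ≤ T - 1 → ∀ x,
      ‖gradient (F (t + 1)) x - gradient (F t) x‖ ≤ J t)
    (Ω : ℕ → Type*) [∀ t, MeasurableSpace (Ω t)]
    (P : (t : ℕ) → Measure (Ω t)) [∀ t, IsProbabilityMeasure (P t)]
    (G : (t : ℕ) → EuclideanSpace ℝ (Fin n) → Ω t → EuclideanSpace ℝ (Fin n))
    (hGmeas : ∀ t, 1 ≤ t → t ≤ T - 1 → Measurable (Function.uncurry (G t)))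
    (hGint : ∀ t, 1 ≤ t → t ≤ T - 1 → ∀ x, Integrable (G t x) (P t))
    (hGmean : ∀ t, 1 ≤ t → t ≤ T - 1 → ∀ x, ∫ ω, G t x ω ∂(P t) = gradient (F t) x)
    (hGvar : ∀ t, 1 ≤ t → t ≤ T - 1 → ∀ x,
      (∫ ω, ‖G t x ω - gradient (F t) x‖ ^ 2 ∂(P t)) ≤ σ ^ 2)
    (x1 : EuclideanSpace ℝ (Fin n)) (Θ γ : ℝ)
    (hΘ : Θ = min (1 / β) (1 / (2 * mu)))
    (hγ : γ = Θ / Real.sqrt T)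
    (Y : (k : ℕ) → ((i : Fin k) → Ω (i + 1)) → EuclideanSpace ℝ (Fin n))
    (hY0 : ∀ ω, Y 0 ω = x1)
    (hYrec : ∀ k : ℕ, k + 1 < T → ∀ ω : (i : Fin (k + 1)) → Ω (i + 1),
      Y (k + 1) ω = Y k (fun i => ω i.castSucc)
        - γ • G (k + 1) (Y k (fun i => ω i.castSucc)) (ω (Fin.last k)))
    (hYmeas : ∀ k, k < T → Measurable (Y k))
    (hFXint : ∀ k, k < T → Integrable (fun ω => F (k + 1) (Y k ω))
      (Measure.pi (fun i : Fin k => P (i + 1))))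
    (hgradXint : ∀ k, k < T → Integrable (fun ω => ‖gradient (F (k + 1)) (Y k ω)‖ ^ 2)
      (Measure.pi (fun i : Fin k => P (i + 1))))
    (hGXint : ∀ k : ℕ, k + 1 < T →
      Integrable (fun ω : (i : Fin (k + 1)) → Ω (i + 1) =>
          ‖G (k + 1) (Y k (fun i => ω i.castSucc)) (ω (Fin.last k))‖ ^ 2)
        (Measure.pi (fun i : Fin (k + 1) => P (i + 1)))) :
    ∑ k ∈ Finset.range T,
        (∫ ω, (F (k + 1) (Y k ω) - Fs (k + 1)) ∂(Measure.pi (fun i : Fin k => P (i + 1))))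
      ≤ ((1 / (mu * Θ)) * (F 1 x1 - Fs 1) + σ ^ 2 / (2 * mu)) * Real.sqrt T
        + (2 * K / (mu * Θ)) * Real.sqrt T * ∑ t ∈ Finset.Icc 1 (T - 1), η t
        + (1 / (2 * mu ^ 2 * Θ)) * Real.sqrt T * ∑ t ∈ Finset.Icc 1 (T - 1), (J t) ^ 2 :=
  stmt9_general T hT β mu K σ hβ hmu F Fs hFdiff hFsmooth hFs_lb hFs_att hPL η J hdrift Ω P G hGint
    hGmean hGvar x1 Θ γ hΘ hγ Y hY0 hYrec hFXint hGXint
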